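/- Let G act primitively on the vertex set of a directed graph Γ that is edge-transitive under G, with (α, β) ∈ EΓ an edge inside a block Λ of the connectivity-one graph Γ. Then every block of Γ contains an edge from the orbit (α, β)^G, and consequently the blocks of Γ are pairwise isomorphic as directed graphs. -/
import Mathlib


open Pointwise

/-- A permutation preserves a directed edge relation. -/
def DPreserves {V : Type*} (E : V → V → Prop) (g : Equiv.Perm V) : Prop :=
  ∀ a b : V, E (g a) (g b) ↔ E a b

/-- The automorphism group of the directed graph with edge relation `E`,
as a subgroup of the symmetric group. -/
def autSub {V : Type*} (E : V → V → Prop) : Subgroup (Equiv.Perm V) where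
  carrier := {g | DPreserves E g}
  one_mem' := fun _ _ => Iff.rfl
  mul_mem' := by
    intro g h hg hh a b
    exact (hg (h a) (h b)).trans (hh a b)
  inv_mem' := by
    intro g hg a b
    simpa using (hg (g⁻¹ a) (g⁻¹ b)).symm

/-- A subgroup of the symmetric group acts primitively: it is transitive and the only
invariant equivalence relations are the trivial and the universal ones. -/
def IsPrimitiveSub {X : Type*} (G : Subgroup (Equiv.Perm X)) : Prop :=
  (∀ a b : X, ∃ g ∈ G, g a = b) ∧
    ∀ r : Setoid X, (∀ g ∈ G, ∀ a b : X, r.r a b ↔ r.r (g a) (g b)) →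
      (∀ a b : X, r.r a b ↔ a = b) ∨ ∀ a b : X, r.r a b

/-- A subgroup of the symmetric group acts regularly: transitively with trivial
point stabilisers. -/
def IsRegularSub {X : Type*} (G : Subgroup (Equiv.Perm X)) : Prop :=
  (∀ a b : X, ∃ g ∈ G, g a = b) ∧ ∀ g ∈ G, ∀ a : X, g a = a → g = 1

/-- `a` is a cut vertex of `Γ`: deleting it disconnects the graph. -/
def IsCutVertexOf {V : Type*} (Γ : SimpleGraph V) (a : V) : Prop :=
  ¬ (Γ.induce {v | v ≠ a}).Preconnected

/-- `Γ` is connected and has connectivity one. -/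
def HasConnOne {V : Type*} (Γ : SimpleGraph V) : Prop :=
  Γ.Connected ∧ ∃ a, IsCutVertexOf Γ a

/-- `B` is (the vertex set of) a block of `Γ`: a connected induced subgraph with no cut
vertex of its own, maximal with these properties. -/
def IsBlockOf {V : Type*} (Γ : SimpleGraph V) (B : Set V) : Prop :=
  (Γ.induce B).Connected ∧ (∀ b ∈ B, (Γ.induce (B \ {b})).Preconnected) ∧
    ∀ C : Set V, B ⊆ C → (Γ.induce C).Connected →
      (∀ c ∈ C, (Γ.induce (C \ {c})).Preconnected) → B = C

/-- Vertex type of the block-cut-vertex tree: cut vertices plus blocks. -/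
def BCVertex {V : Type*} (Γ : SimpleGraph V) : Type _ :=
  {a : V // IsCutVertexOf Γ a} ⊕ {B : Set V // IsBlockOf Γ B}

/-- The block-cut-vertex tree: a cut vertex is adjacent to the blocks containing it. -/
def bcTree {V : Type*} (Γ : SimpleGraph V) : SimpleGraph (BCVertex Γ) :=
  SimpleGraph.fromRel (fun x y =>
    ∃ (a : {a : V // IsCutVertexOf Γ a}) (B : {B : Set V // IsBlockOf Γ B}),
      x = Sum.inl a ∧ y = Sum.inr B ∧ (a : V) ∈ (B : Set V))

/-- The stabiliser (in the full symmetric group) of a vertex of the block-cut-vertex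
tree: the point stabiliser for a cut vertex, the setwise stabiliser for a block. -/
def bcStab {V : Type*} {Γ : SimpleGraph V} (x : BCVertex Γ) : Subgroup (Equiv.Perm V) :=
  match x with
  | Sum.inl a => MulAction.stabilizer (Equiv.Perm V) (a : V)
  | Sum.inr B => MulAction.stabilizer (Equiv.Perm V) (B : Set V)

/-- `z` lies on a geodesic between `a` and `b`. -/
def OnGeodesic {W : Type*} (T : SimpleGraph W) (a b z : W) : Prop :=
  T.dist a z + T.dist z b = T.dist a b

/-- `a` and `b` lie in the same connected component of `T` with the vertex `y` deleted. -/
def SameCompAvoiding {W : Type*} (T : SimpleGraph W) (y a b : W) : Prop :=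
  ∃ (ha : a ≠ y) (hb : b ≠ y), (T.induce {v | v ≠ y}).Reachable ⟨a, ha⟩ ⟨b, hb⟩

/-- `B` and `C` are isomorphic as directed graphs (with edge relation `E`). -/
def BlocksIsomorphic {V : Type*} (E : V → V → Prop) (B C : Set V) : Prop :=
  ∃ e : B ≃ C, ∀ a b : B, E (a : V) (b : V) ↔ E (e a : V) (e b : V)

/-- The automorphism group of the directed graph induced on `B`. -/
def BlockAut {V : Type*} (E : V → V → Prop) (B : Set V) : Subgroup (Equiv.Perm B) :=
  autSub (fun a b : B => E (a : V) (b : V))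

/-- `B` has at least three vertices. -/
def HasThreeVertices {V : Type*} (B : Set V) : Prop :=
  ∃ x y z : V, x ∈ B ∧ y ∈ B ∧ z ∈ B ∧ x ≠ y ∧ x ≠ z ∧ y ≠ z

/-- Primitivity for an abstract group action: transitivity, and the only invariant
equivalence relations are the trivial and the universal ones. -/
def IsPrimAction (G Ω : Type*) [Group G] [MulAction G Ω] : Prop :=
  MulAction.IsPretransitive G Ω ∧
    ∀ r : Setoid Ω, (∀ (g : G) (a b : Ω), r.r a b ↔ r.r (g • a) (g • b)) →
      (∀ a b : Ω, r.r a b ↔ a = b) ∨ ∀ a b : Ω, r.r a b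


namespace Stmt19Aux

variable {V : Type*}

/-- Inclusion homomorphism between induced subgraphs. -/
def incHom (Γ : SimpleGraph V) {A A' : Set V} (h : A ⊆ A') :
    Γ.induce A →g Γ.induce A' where
  toFun v := ⟨v.1, h v.2⟩
  map_rel' := by intro a b hab; exact hab

lemma exists_adj_of_reachable_ne {W : Type*} {H : SimpleGraph W} {u v : W}
    (hr : H.Reachable u v) (hne : u ≠ v) : ∃ w, H.Adj u w := by
  obtain ⟨p⟩ := hr
  cases p with
  | nil => exact absurd rfl hne
  | cons h _ => exact ⟨_, h⟩

lemma precon_union (Γ : SimpleGraph V) {A B : Set V}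
    (hA : (Γ.induce A).Preconnected) (hB : (Γ.induce B).Preconnected)
    {x : V} (hxA : x ∈ A) (hxB : x ∈ B) :
    (Γ.induce (A ∪ B)).Preconnected := by
  let fA := incHom Γ (Set.subset_union_left : A ⊆ A ∪ B)
  let fB := incHom Γ (Set.subset_union_right : B ⊆ A ∪ B)
  have key : ∀ u : ↥(A ∪ B), (Γ.induce (A ∪ B)).Reachable u ⟨x, Or.inl hxA⟩ := by
    intro u
    rcases u.2 with hu | hu
    · have h1 := (hA ⟨u.1, hu⟩ ⟨x, hxA⟩).map fA
      have e1 : fA ⟨u.1, hu⟩ = u := Subtype.ext rfl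
      have e2 : fA ⟨x, hxA⟩ = (⟨x, Or.inl hxA⟩ : ↥(A ∪ B)) := Subtype.ext rfl
      rwa [e1, e2] at h1
    · have h1 := (hB ⟨u.1, hu⟩ ⟨x, hxB⟩).map fB
      have e1 : fB ⟨u.1, hu⟩ = u := Subtype.ext rfl
      have e2 : fB ⟨x, hxB⟩ = (⟨x, Or.inl hxA⟩ : ↥(A ∪ B)) := Subtype.ext rfl
      rwa [e1, e2] at h1
  intro u v
  exact (key u).trans (key v).symm

lemma piece_precon {Γ : SimpleGraph V} {B : Set V} (hB : IsBlockOf Γ B) (d : V) :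
    (Γ.induce (B \ {d})).Preconnected := by
  by_cases hd : d ∈ B
  · exact hB.2.1 d hd
  · rw [Set.diff_singleton_eq_self hd]
    exact hB.1.preconnected

/-- Two blocks sharing two distinct vertices are equal. -/
lemma block_eq_of_two {Γ : SimpleGraph V} {B C : Set V}
    (hB : IsBlockOf Γ B) (hC : IsBlockOf Γ C) {x y : V}
    (hxB : x ∈ B) (hxC : x ∈ C) (hyB : y ∈ B) (hyC : y ∈ C) (hxy : x ≠ y) :
    B = C := by
  have hconn : (Γ.induce (B ∪ C)).Connected := by
    haveI : Nonempty ↥(B ∪ C) := ⟨⟨x, Or.inl hxB⟩⟩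
    exact ⟨precon_union Γ hB.1.preconnected hC.1.preconnected hxB hxC⟩
  have hcut : ∀ d ∈ B ∪ C, (Γ.induce ((B ∪ C) \ {d})).Preconnected := by
    intro d _
    rw [Set.union_diff_distrib]
    rcases eq_or_ne d x with hdx | hdx
    · have hyd : y ∉ ({d} : Set V) := by
        simp only [Set.mem_singleton_iff, hdx]
        exact hxy.symm
      exact precon_union Γ (piece_precon hB d) (piece_precon hC d)
        ⟨hyB, hyd⟩ ⟨hyC, hyd⟩
    · have hxd : x ∉ ({d} : Set V) := by
        simp only [Set.mem_singleton_iff]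
        exact hdx.symm
      exact precon_union Γ (piece_precon hB d) (piece_precon hC d)
        ⟨hxB, hxd⟩ ⟨hxC, hxd⟩
  have e1 := hB.2.2 (B ∪ C) Set.subset_union_left hconn hcut
  have e2 := hC.2.2 (B ∪ C) Set.subset_union_right hconn hcut
  exact e1.trans e2.symm

section Image

variable {Γ : SimpleGraph V} {g : Equiv.Perm V}

/-- Homomorphism from an induced subgraph to its image under an
adjacency-preserving permutation. -/
def imgHom (hg : ∀ a b : V, Γ.Adj (g a) (g b) ↔ Γ.Adj a b) {A : Set V} :
    Γ.induce A →g Γ.induce (⇑g '' A) where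
  toFun v := ⟨g v.1, Set.mem_image_of_mem _ v.2⟩
  map_rel' := by intro a b hab; exact (hg a.1 b.1).mpr hab

lemma precon_image (hg : ∀ a b : V, Γ.Adj (g a) (g b) ↔ Γ.Adj a b)
    {A : Set V} (hA : (Γ.induce A).Preconnected) :
    (Γ.induce (⇑g '' A)).Preconnected := by
  let f := imgHom hg (A := A)
  intro u v
  obtain ⟨a, ha, hau⟩ := u.2
  obtain ⟨b, hb, hbv⟩ := v.2
  have h1 := (hA ⟨a, ha⟩ ⟨b, hb⟩).map f
  have e1 : f ⟨a, ha⟩ = u := Subtype.ext hau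
  have e2 : f ⟨b, hb⟩ = v := Subtype.ext hbv
  rwa [e1, e2] at h1

lemma connected_image (hg : ∀ a b : V, Γ.Adj (g a) (g b) ↔ Γ.Adj a b)
    {A : Set V} (hA : (Γ.induce A).Connected) :
    (Γ.induce (⇑g '' A)).Connected := by
  obtain ⟨⟨a, ha⟩⟩ := hA.nonempty
  haveI : Nonempty ↥(⇑g '' A) := ⟨⟨g a, Set.mem_image_of_mem _ ha⟩⟩
  exact ⟨precon_image hg hA.preconnected⟩

lemma hg_inv (hg : ∀ a b : V, Γ.Adj (g a) (g b) ↔ Γ.Adj a b) : ∀ a b : V, Γ.Adj (g⁻¹ a) (g⁻¹ b) ↔ Γ.Adj a b := by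
  intro a b
  simpa using (hg (g⁻¹ a) (g⁻¹ b)).symm

lemma block_image (hg : ∀ a b : V, Γ.Adj (g a) (g b) ↔ Γ.Adj a b)
    {B : Set V} (hB : IsBlockOf Γ B) : IsBlockOf Γ (⇑g '' B) := by
  refine ⟨connected_image hg hB.1, ?_, ?_⟩
  · rintro _ ⟨b, hb, rfl⟩
    have hset : (⇑g '' B) \ {g b} = ⇑g '' (B \ {b}) := by
      rw [Set.image_diff g.injective, Set.image_singleton]
    rw [hset]
    exact precon_image hg (hB.2.1 b hb)
  · intro C hsub hCconn hCcut
    have h1 : B ⊆ ⇑g⁻¹ '' C := by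
      intro b hb
      exact ⟨g b, hsub (Set.mem_image_of_mem _ hb), by simp⟩
    have h2 : B = ⇑g⁻¹ '' C := by
      refine hB.2.2 _ h1 (connected_image (hg_inv hg) hCconn) ?_
      rintro _ ⟨c, hc, rfl⟩
      have hset : (⇑g⁻¹ '' C) \ {g⁻¹ c} = ⇑g⁻¹ '' (C \ {c}) := by
        rw [Set.image_diff g⁻¹.injective, Set.image_singleton]
      rw [hset]
      exact precon_image (hg_inv hg) (hCcut c hc)
    rw [h2, ← Set.image_comp]
    have : ⇑g ∘ ⇑g⁻¹ = id := by
      funext c; simp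
    rw [this, Set.image_id]

end Image

/-- Every block contains an adjacent pair. -/
lemma block_has_edge {Γ : SimpleGraph V} (hconn : Γ.Connected)
    {u₀ v₀ : V} (hV2 : u₀ ≠ v₀) {B : Set V} (hB : IsBlockOf Γ B) :
    ∃ a ∈ B, ∃ b ∈ B, Γ.Adj a b := by
  obtain ⟨⟨a, ha⟩⟩ := hB.1.nonempty
  by_cases hsing : ∀ x ∈ B, x = a
  · -- B = {a}; find a neighbour of a in Γ and contradict maximality
    obtain ⟨c, hc⟩ : ∃ c : V, c ≠ a := by
      rcases eq_or_ne u₀ a with rfl | h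
      · exact ⟨v₀, fun h => hV2 h.symm⟩
      · exact ⟨u₀, h⟩
    obtain ⟨w, hw⟩ := exists_adj_of_reachable_ne (hconn.preconnected a c) (fun h => hc h.symm)
    have hne : a ≠ w := hw.ne
    -- C = {a, w}
    have hCconn : (Γ.induce ({a, w} : Set V)).Connected := by
      haveI : Nonempty ↥({a, w} : Set V) := ⟨⟨a, Or.inl rfl⟩⟩
      refine ⟨?_⟩
      have key : ∀ u : ↥({a, w} : Set V),
          (Γ.induce ({a, w} : Set V)).Reachable u ⟨a, Or.inl rfl⟩ := by
        rintro ⟨u, hu⟩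
        rcases hu with rfl | hu
        · exact SimpleGraph.Reachable.refl _
        · rw [Set.mem_singleton_iff] at hu
          subst hu
          exact SimpleGraph.Adj.reachable (by simpa using hw.symm)
      intro u v
      exact (key u).trans (key v).symm
    have hCcut : ∀ c' ∈ ({a, w} : Set V),
        (Γ.induce (({a, w} : Set V) \ {c'})).Preconnected := by
      intro c' hc' u v
      have hu1 : (u : V) ∈ ({a, w} : Set V) := u.2.1
      have hv1 : (v : V) ∈ ({a, w} : Set V) := v.2.1
      have hu2 : (u : V) ≠ c' := by simpa using u.2.2
      have hv2 : (v : V) ≠ c' := by simpa using v.2.2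
      have huv : (u : V) = (v : V) := by
        rcases hc' with rfl | hc'
        · have hu3 : (u : V) = w := by
            rcases hu1 with h | h
            · exact absurd h hu2
            · simpa using h
          have hv3 : (v : V) = w := by
            rcases hv1 with h | h
            · exact absurd h hv2
            · simpa using h
          rw [hu3, hv3]
        · rw [Set.mem_singleton_iff] at hc'
          subst hc'
          have hu3 : (u : V) = a := by
            rcases hu1 with h | h
            · exact h
            · exact absurd (by simpa using h) hu2
          have hv3 : (v : V) = a := by
            rcases hv1 with h | h
            · exact h
            · exact absurd (by simpa using h) hv2
          rw [hu3, hv3]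
      have : u = v := Subtype.ext huv
      rw [this]
    have hsub : B ⊆ ({a, w} : Set V) := by
      intro x hx
      rw [hsing x hx]
      exact Or.inl rfl
    have hBeq := hB.2.2 _ hsub hCconn hCcut
    have : w ∈ B := by rw [hBeq]; exact Or.inr rfl
    exact absurd (hsing w this) (fun h => hne h.symm)
  · push_neg at hsing
    obtain ⟨b, hb, hba⟩ := hsing
    have hr : (Γ.induce B).Reachable ⟨a, ha⟩ ⟨b, hb⟩ := hB.1.preconnected _ _
    have hne : (⟨a, ha⟩ : ↥B) ≠ ⟨b, hb⟩ := by
      intro h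
      exact hba (congrArg Subtype.val h).symm
    obtain ⟨w, hw⟩ := exists_adj_of_reachable_ne hr hne
    exact ⟨a, ha, w.1, w.2, hw⟩

end Stmt19Aux

/-- If `G` is primitive and edge-transitive on a connectivity-one graph
and `(α, β)` is an edge inside the block `Λ`, then every block contains an edge from the
orbit of `(α, β)`, and consequently the blocks are pairwise isomorphic directed graphs. -/
theorem stmt19 {V : Type*} (E : V → V → Prop) (G : Subgroup (Equiv.Perm V))
    (hGaut : ∀ g ∈ G, DPreserves E g)
    (hconn1 : HasConnOne (SimpleGraph.fromRel E))
    (hprim : IsPrimitiveSub G)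
    (hedget : ∀ a b c d : V, E a b → E c d → ∃ g ∈ G, g a = c ∧ g b = d)
    (α β : V) (hE : E α β)
    (Λ : Set V) (hΛ : IsBlockOf (SimpleGraph.fromRel E) Λ)
    (hαΛ : α ∈ Λ) (hβΛ : β ∈ Λ) :
    (∀ Λ' : Set V, IsBlockOf (SimpleGraph.fromRel E) Λ' →
      ∃ g ∈ G, (g : Equiv.Perm V) α ∈ Λ' ∧ (g : Equiv.Perm V) β ∈ Λ') ∧
    ∀ B C : Set V, IsBlockOf (SimpleGraph.fromRel E) B →
      IsBlockOf (SimpleGraph.fromRel E) C → BlocksIsomorphic E B C := by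
  classical
  set Γ := SimpleGraph.fromRel E with hΓ
  -- adjacency preservation for elements of G
  have hadjpres : ∀ k : Equiv.Perm V, DPreserves E k →
      ∀ a b : V, Γ.Adj (k a) (k b) ↔ Γ.Adj a b := by
    intro k hk a b
    simp only [hΓ, SimpleGraph.fromRel_adj]
    constructor
    · rintro ⟨hne, h | h⟩
      · exact ⟨fun h' => hne (congrArg k h'), Or.inl ((hk a b).mp h)⟩
      · exact ⟨fun h' => hne (congrArg k h'), Or.inr ((hk b a).mp h)⟩
    · rintro ⟨hne, h | h⟩
      · exact ⟨fun h' => hne (k.injective h'), Or.inl ((hk a b).mpr h)⟩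
      · exact ⟨fun h' => hne (k.injective h'), Or.inr ((hk b a).mpr h)⟩
  -- V has two distinct vertices (from the cut vertex)
  obtain ⟨cv, hcv⟩ := hconn1.2
  obtain ⟨u₀, hu₀⟩ : ∃ u : V, u ≠ cv := by
    by_contra h
    push_neg at h
    exact hcv (fun u v => absurd (h u.1) u.2)
  -- first part
  have hfirst : ∀ Λ' : Set V, IsBlockOf Γ Λ' →
      ∃ g ∈ G, (g : Equiv.Perm V) α ∈ Λ' ∧ (g : Equiv.Perm V) β ∈ Λ' := by
    intro Λ' hΛ'
    obtain ⟨a, ha, b, hb, hab⟩ := Stmt19Aux.block_has_edge hconn1.1 hu₀ hΛ'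
    rw [hΓ, SimpleGraph.fromRel_adj] at hab
    rcases hab.2 with h | h
    · obtain ⟨g, hgG, h1, h2⟩ := hedget α β a b hE h
      exact ⟨g, hgG, h1 ▸ ha, h2 ▸ hb⟩
    · obtain ⟨g, hgG, h1, h2⟩ := hedget α β b a hE h
      exact ⟨g, hgG, h1 ▸ hb, h2 ▸ ha⟩
  -- α ≠ β
  have hαβ : α ≠ β := by
    obtain ⟨w, hw⟩ := Stmt19Aux.exists_adj_of_reachable_ne
      (hconn1.1.preconnected u₀ cv) hu₀
    rw [hΓ, SimpleGraph.fromRel_adj] at hw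
    rcases hw.2 with h | h
    · obtain ⟨g, _, h1, h2⟩ := hedget α β u₀ w hE h
      intro he; exact hw.1 (h1 ▸ h2 ▸ congrArg g he)
    · obtain ⟨g, _, h1, h2⟩ := hedget α β w u₀ hE h
      intro he; exact hw.1 ((h1 ▸ h2 ▸ congrArg g he) : w = u₀).symm
  refine ⟨hfirst, ?_⟩
  intro B C hB hC
  obtain ⟨g, hgG, hgα, hgβ⟩ := hfirst B hB
  obtain ⟨h, hhG, hhα, hhβ⟩ := hfirst C hC
  set k : Equiv.Perm V := h * g⁻¹ with hkdef
  have hkG : k ∈ G := mul_mem hhG (inv_mem hgG)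
  have hkE : DPreserves E k := hGaut k hkG
  have hkadj := hadjpres k hkE
  have hblk : IsBlockOf Γ (⇑k '' B) := Stmt19Aux.block_image hkadj hB
  have hk1 : k (g α) = h α := by simp [hkdef]
  have hk2 : k (g β) = h β := by simp [hkdef]
  have hmem1 : h α ∈ ⇑k '' B := ⟨g α, hgα, hk1⟩
  have hmem2 : h β ∈ ⇑k '' B := ⟨g β, hgβ, hk2⟩
  have hhne : h α ≠ h β := fun hh => hαβ (h.injective hh)
  have hBC : ⇑k '' B = C :=
    Stmt19Aux.block_eq_of_two hblk hC hmem1 hhα hmem2 hhβ hhne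
  refine ⟨?_, ?_⟩
  · exact (Equiv.Set.image (⇑k) B k.injective).trans (Equiv.setCongr hBC)
  · intro a b
    simp only [Equiv.trans_apply, Equiv.setCongr_apply, Equiv.Set.image_apply]
    exact (hkE a.1 b.1).symm
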